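/- Let A be a commutative K-algebra and let ⟨A,A⟩ = (A⊗A)/S where S is spanned by all a⊗b + b⊗a and ab⊗c + bc⊗a + ca⊗b. Then for any invertible f ∈ A and all integers m, n one has ⟨fᵐ, fⁿ⟩ = m·δ_{m+n,0}·⟨f, f⁻¹⟩ in ⟨A,A⟩. -/

import Mathlib

/-!
Antisymmetry turns the cyclic relation into the Leibniz rule `⟨ab, c⟩ = ⟨a, bc⟩ + ⟨b, ac⟩`.
For a unit `u` and fixed `w` it gives `⟨uᵐ⁺¹, u⁻ᵐw⟩ = ⟨uᵐ, u¹⁻ᵐw⟩ + ⟨u, w⟩`, and `⟨1, ·⟩ = 0`,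
so `⟨uᵐ, u¹⁻ᵐw⟩ = m⟨u, w⟩`. With `w = uᵐ⁺ⁿ⁻¹` this is `⟨uᵐ, uⁿ⟩ = m⟨u, uᵐ⁺ⁿ⁻¹⟩`; with `m = k + 1`
and `w = uᵏ` it is `(k + 1)⟨u, uᵏ⟩ = ⟨uᵏ⁺¹, 1⟩ = 0`, so in characteristic zero `⟨u, uᵏ⟩ = 0`
unless `k = -1`.
-/

open TensorProduct

noncomputable section

variable (K : Type*) [Field K] (A : Type*) [CommRing A] [Algebra K A]

/-- The subspace `S ⊆ A ⊗ A` spanned by all `a⊗b + b⊗a` and `ab⊗c + bc⊗a + ca⊗b`. -/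
def cycRel : Submodule K (A ⊗[K] A) :=
  Submodule.span K
    ({x | ∃ a b : A, x = a ⊗ₜ b + b ⊗ₜ a} ∪
     {x | ∃ a b c : A, x = (a*b) ⊗ₜ c + (b*c) ⊗ₜ a + (c*a) ⊗ₜ b})

/-- `⟨A,A⟩ = (A ⊗ A)/S`. -/
abbrev CycPair := (A ⊗[K] A) ⧸ cycRel K A

/-- `⟨a,b⟩`, the class of `a ⊗ b` in `⟨A,A⟩`. -/
def cycPair (a b : A) : CycPair K A := Submodule.Quotient.mk (a ⊗ₜ b)

lemma cycPair_add_swap (a b : A) : cycPair K A a b + cycPair K A b a = 0 :=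
  (Submodule.Quotient.mk_eq_zero _).2 <| Submodule.subset_span <| Or.inl ⟨a, b, rfl⟩

lemma cycPair_cyclic (a b c : A) :
    cycPair K A (a * b) c + cycPair K A (b * c) a + cycPair K A (c * a) b = 0 :=
  (Submodule.Quotient.mk_eq_zero _).2 <| Submodule.subset_span <| Or.inr ⟨a, b, c, rfl⟩

lemma cycPair_swap (a b : A) : cycPair K A b a = -cycPair K A a b :=
  eq_neg_of_add_eq_zero_right (cycPair_add_swap K A a b)

lemma cycPair_mul_left (a b c : A) :
    cycPair K A (a * b) c = cycPair K A a (b * c) + cycPair K A b (a * c) := by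
  have h := cycPair_cyclic K A a b c
  rw [cycPair_swap K A a (b * c), cycPair_swap K A b (c * a), mul_comm c a] at h
  linear_combination (norm := abel) h

lemma cycPair_one_right (a : A) : cycPair K A a 1 = 0 := by
  have h := cycPair_cyclic K A a 1 1
  simp only [mul_one, one_mul, cycPair_swap K A a 1] at h
  simpa using h

lemma cycPair_one_left (a : A) : cycPair K A 1 a = 0 := by
  rw [cycPair_swap, cycPair_one_right, neg_zero]

lemma cycPair_zpow_zpow_mul (u : Aˣ) (m : ℤ) (w : A) :
    cycPair K A ((u ^ m : Aˣ) : A) ((u ^ (1 - m) : Aˣ) * w) = m • cycPair K A u w := by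
  have step (j : ℤ) : cycPair K A ((u ^ (j + 1) : Aˣ) : A) ((u ^ (1 - (j + 1)) : Aˣ) * w) =
      cycPair K A ((u ^ j : Aˣ) : A) ((u ^ (1 - j) : Aˣ) * w) + cycPair K A u w := by
    rw [show (1 : ℤ) - (j + 1) = -j by ring, zpow_add_one, mul_comm, Units.val_mul,
      cycPair_mul_left, add_comm, ← mul_assoc, ← mul_assoc, ← Units.val_mul, ← Units.val_mul,
      ← zpow_add, ← zpow_one_add, add_neg_cancel, zpow_zero, Units.val_one, one_mul, ← sub_eq_add_neg]
  induction m using Int.induction_on with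
  | zero => simp [cycPair_one_left]
  | succ k ih => rw [step, ih, add_smul, one_smul]
  | pred k ih => rw [← sub_eq_iff_eq_add.2 (step _), sub_add_cancel, ih, sub_smul, one_smul]

lemma cycPair_self_zpow_eq_zero [CharZero K] (u : Aˣ) {k : ℤ} (hk : k ≠ -1) :
    cycPair K A u ((u ^ k : Aˣ) : A) = 0 := by
  have h := cycPair_zpow_zpow_mul K A u (k + 1) (u ^ k : Aˣ)
  rw [← Units.val_mul, ← zpow_add, sub_add_cancel_right, neg_add_cancel, zpow_zero, Units.val_one,
    cycPair_one_right, ← Int.cast_smul_eq_zsmul K] at h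
  exact (smul_eq_zero.1 h.symm).resolve_left (by exact_mod_cast (by omega : k + 1 ≠ 0))

/-- For any invertible `f` in a commutative `K`-algebra `A` and all integers `m, n`,
one has `⟨fᵐ, fⁿ⟩ = m·δ_{m+n,0}·⟨f, f⁻¹⟩` in `⟨A,A⟩ = (A⊗A)/S`. -/
theorem cycPair_pow_unit (K : Type*) [Field K] [CharZero K]
    (A : Type*) [CommRing A] [Algebra K A] (f : A) (hf : IsUnit f) (m n : ℤ) :
    cycPair K A (((hf.unit ^ m : Aˣ) : A)) (((hf.unit ^ n : Aˣ) : A)) =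
      (if m + n = 0 then m • cycPair K A f (((hf.unit⁻¹ : Aˣ) : A)) else 0) := by
  have hn : hf.unit ^ n = hf.unit ^ (1 - m) * hf.unit ^ (m + n - 1) := by
    rw [← zpow_add]; ring_nf
  rw [hn, Units.val_mul, cycPair_zpow_zpow_mul]
  split_ifs with h
  · rw [h, zero_sub, zpow_neg_one, hf.unit_spec]
  · rw [cycPair_self_zpow_eq_zero K A _ (by omega), smul_zero]
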